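/- Let N ≥ 2 and y ∈ ℝ^N (or ℂ^N). Suppose J = {j : sin(y_j) = 0} has cardinality m ≥ 2. Then the kernel of the secular matrix A(y, η) has dimension exactly m − 1, for any η ∈ ℂ. -/

import Mathlib

/-!
The first `N - 1` rows of `A(y, η) x = 0` say that `sin (y j) * x j` does not depend on `j`;
since it vanishes at an index of `J`, it vanishes everywhere, so `x` is supported on `J`.
The last row then reduces to the single equation `∑ j ∈ J, cos (y j) * x j = 0`, which is
nontrivial because `cos` does not vanish where `sin` does. Hence the kernel is a hyperplane in
the `m`-dimensional space of vectors supported on `J`.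
-/

open Complex Finset Matrix

section WeightedSum

variable {K ι : Type*} [Field K]

def weightedSumProdRestrictCompl (s : Finset ι) (c : ι → K) :
    (ι → K) →ₗ[K] K × ({j // j ∉ s} → K) where
  toFun x := (∑ j ∈ s, c j * x j, fun j => x j)
  map_add' x x' := by simp [mul_add, sum_add_distrib]; rfl
  map_smul' a x := by simp [mul_sum, mul_left_comm]; rfl

variable {s : Finset ι} {c : ι → K}

theorem mem_ker_weightedSumProdRestrictCompl {x : ι → K} :
    x ∈ LinearMap.ker (weightedSumProdRestrictCompl s c) ↔
      ∑ j ∈ s, c j * x j = 0 ∧ ∀ j ∉ s, x j = 0 := by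
  simp [weightedSumProdRestrictCompl, funext_iff]

variable [DecidableEq ι]

theorem weightedSumProdRestrictCompl_surjective {j₀ : ι} (hj₀ : j₀ ∈ s) (hc : c j₀ ≠ 0) :
    Function.Surjective (weightedSumProdRestrictCompl s c) := by
  rintro ⟨z, w⟩
  refine ⟨fun j => if h : j ∈ s then (if j = j₀ then z / c j₀ else 0) else w ⟨j, h⟩, ?_⟩
  ext j
  · simp only [weightedSumProdRestrictCompl, LinearMap.coe_mk, AddHom.coe_mk]
    rw [sum_eq_single_of_mem j₀ hj₀ (fun j hj hne => by simp [hj, hne])]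
    simp [hj₀, mul_div_cancel₀ _ hc]
  · simp [weightedSumProdRestrictCompl, j.2]

theorem finrank_ker_weightedSumProdRestrictCompl [Fintype ι] {j₀ : ι} (hj₀ : j₀ ∈ s)
    (hc : c j₀ ≠ 0) :
    Module.finrank K (LinearMap.ker (weightedSumProdRestrictCompl s c)) = s.card - 1 := by
  have h := LinearMap.finrank_range_add_finrank_ker (weightedSumProdRestrictCompl s c)
  rw [LinearMap.range_eq_top.mpr (weightedSumProdRestrictCompl_surjective hj₀ hc), finrank_top,
    Module.finrank_prod, Module.finrank_self, Module.finrank_fintype_fun_eq_card,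
    Module.finrank_fintype_fun_eq_card, Fintype.card_subtype_compl, Fintype.card_coe] at h
  have := s.card_le_univ
  have := s.card_pos.mpr ⟨j₀, hj₀⟩
  omega

end WeightedSum

theorem Fin.eq_of_forall_eq_succ {α : Type*} {N : ℕ} {f : Fin N → α}
    (hf : ∀ (i : Fin N) (hi : (i : ℕ) + 1 < N), f i = f ⟨i + 1, hi⟩) (i j : Fin N) :
    f i = f j := by
  have h0 : ∀ (k : ℕ) (hk : k < N), f ⟨k, hk⟩ = f ⟨0, by omega⟩ := by
    intro k
    induction k with
    | zero => intro _; rfl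
    | succ k ih => intro hk; rw [← hf ⟨k, by omega⟩ hk, ih]
  rw [h0 i i.2, h0 j j.2]

noncomputable def secularMatrix {N : ℕ} (y : Fin N → ℂ) (η : ℂ) : Matrix (Fin N) (Fin N) ℂ :=
  Matrix.of fun i j =>
    if (i : ℕ) + 1 < N then
      (if j = i then sin (y i) else if (j : ℕ) = (i : ℕ) + 1 then -sin (y j) else 0)
    else
      (if (j : ℕ) + 1 = N then cos (y j) + η * sin (y j) else cos (y j))

section SecularMatrix

variable {N : ℕ} (y : Fin N → ℂ) (η : ℂ) (x : Fin N → ℂ)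

theorem secularMatrix_mulVec_of_lt {i : Fin N} (hi : (i : ℕ) + 1 < N) :
    (secularMatrix y η *ᵥ x) i = sin (y i) * x i - sin (y ⟨i + 1, hi⟩) * x ⟨i + 1, hi⟩ := by
  have hentry : ∀ j, secularMatrix y η i j =
      (if j = i then sin (y i) else 0) + (if j = ⟨i + 1, hi⟩ then -sin (y j) else 0) := by
    intro j
    by_cases hji : j = i
    · subst hji; simp [secularMatrix, hi, Fin.ext_iff]
    · have : (j : ℕ) ≠ i := fun h => hji (Fin.ext h)
      simp [secularMatrix, hi, hji, this, Fin.ext_iff]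
  simp [Matrix.mulVec, dotProduct, hentry, add_mul, sum_add_distrib, ite_mul, sub_eq_add_neg]

theorem secularMatrix_mulVec_of_not_lt {i : Fin N} (hi : ¬(i : ℕ) + 1 < N) :
    (secularMatrix y η *ᵥ x) i = ∑ j, cos (y j) * x j + η * sin (y i) * x i := by
  have hentry : ∀ j, secularMatrix y η i j =
      cos (y j) + if j = i then η * sin (y j) else 0 := by
    intro j
    have : (j : ℕ) + 1 = N ↔ j = i := by rw [Fin.ext_iff]; omega
    simp only [secularMatrix, of_apply, if_neg hi, this]
    split_ifs <;> simp_all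
  simp [Matrix.mulVec, dotProduct, hentry, add_mul, sum_add_distrib, ite_mul, mul_assoc]

theorem secularMatrix_mulVec_eq_zero_iff (hy : ∃ j, sin (y j) = 0) :
    secularMatrix y η *ᵥ x = 0 ↔ (∀ j, sin (y j) * x j = 0) ∧ ∑ j, cos (y j) * x j = 0 := by
  obtain ⟨j₀, hj₀⟩ := hy
  have hN := j₀.pos
  have hlast : ¬(N - 1) + 1 < N := by omega
  constructor
  · intro hx
    have hsin : ∀ j, sin (y j) * x j = 0 := by
      have hconst := Fin.eq_of_forall_eq_succ (f := fun j => sin (y j) * x j) fun i hi =>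
        sub_eq_zero.mp <| (secularMatrix_mulVec_of_lt y η x hi).symm.trans (congrFun hx i)
      intro j
      rw [hconst j j₀, hj₀, zero_mul]
    refine ⟨hsin, ?_⟩
    have := (secularMatrix_mulVec_of_not_lt y η x (i := ⟨N - 1, by omega⟩) hlast).symm.trans
      (congrFun hx _)
    rwa [mul_assoc, hsin, mul_zero, add_zero] at this
  · rintro ⟨hsin, hcos⟩
    ext i
    by_cases hi : (i : ℕ) + 1 < N
    · rw [secularMatrix_mulVec_of_lt y η x hi, hsin, hsin, sub_zero, Pi.zero_apply]
    · rw [secularMatrix_mulVec_of_not_lt y η x hi, hcos, mul_assoc, hsin, mul_zero, add_zero,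
        Pi.zero_apply]

theorem ker_secularMatrix (hy : ∃ j, sin (y j) = 0) :
    LinearMap.ker (secularMatrix y η).mulVecLin =
      LinearMap.ker (weightedSumProdRestrictCompl {j | sin (y j) = 0} fun j => cos (y j)) := by
  ext x
  rw [LinearMap.mem_ker, mulVecLin_apply, secularMatrix_mulVec_eq_zero_iff y η x hy,
    mem_ker_weightedSumProdRestrictCompl]
  have hsin : (∀ j, sin (y j) * x j = 0) ↔ ∀ j ∉ ({j | sin (y j) = 0} : Finset _), x j = 0 := by
    simp [or_iff_not_imp_left]
  rw [hsin, and_comm, and_congr_left_iff]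
  intro hx
  rw [← sum_subset (subset_univ {j | sin (y j) = 0}) fun j _ hj => by rw [hx j hj, mul_zero]]

end SecularMatrix

theorem finrank_ker_secularMatrix {N : ℕ} (y : Fin N → ℂ) (η : ℂ) (hy : ∃ j, sin (y j) = 0) :
    Module.finrank ℂ (LinearMap.ker (secularMatrix y η).mulVecLin) =
      #{j | sin (y j) = 0} - 1 := by
  obtain ⟨j₀, hj₀⟩ := hy
  rw [ker_secularMatrix y η ⟨j₀, hj₀⟩]
  refine finrank_ker_weightedSumProdRestrictCompl (j₀ := j₀) (by simpa using hj₀) fun hc => ?_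
  simpa [hj₀, hc] using sin_sq_add_cos_sq (y j₀)

theorem ker_dim_eq_general (N : ℕ) (y : Fin N → ℝ) (η : ℂ)
    (m : ℕ) (hm : 2 ≤ m)
    (hJ : (Finset.univ.filter (fun j : Fin N => Real.sin (y j) = 0)).card = m)
    (A : Matrix (Fin N) (Fin N) ℂ)
    (hA : ∀ i j : Fin N, A i j =
      if (i : ℕ) + 1 < N then
        (if j = i then Complex.sin ((y i : ℝ) : ℂ)
         else if (j : ℕ) = (i : ℕ) + 1 then -Complex.sin ((y j : ℝ) : ℂ) else 0)
      else
        (if (j : ℕ) + 1 = N then Complex.cos ((y j : ℝ) : ℂ) + η * Complex.sin ((y j : ℝ) : ℂ)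
         else Complex.cos ((y j : ℝ) : ℂ))) :
    Module.finrank ℂ (LinearMap.ker A.mulVecLin) = m - 1 := by
  have hzeros :
      (univ.filter fun j => sin (y j : ℂ) = 0) = univ.filter fun j => Real.sin (y j) = 0 := by
    simp only [← ofReal_sin, ofReal_eq_zero]
  obtain ⟨j₀, hj₀⟩ : (univ.filter fun j => Real.sin (y j) = 0).Nonempty := by
    rw [← card_pos, hJ]; omega
  have hA_eq : A = secularMatrix (fun j => (y j : ℂ)) η := Matrix.ext hA
  rw [hA_eq, finrank_ker_secularMatrix _ _ ⟨j₀, by simpa [← ofReal_sin] using hj₀⟩, hzeros, hJ]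

/-- If `J = {j : sin(y_j) = 0}` has cardinality `m ≥ 2`, the kernel of the
secular matrix `A(y,η)` has dimension exactly `m − 1`, for every `η`. -/
theorem ker_dim_eq (N : ℕ) (hN : 2 ≤ N) (y : Fin N → ℝ) (η : ℂ)
    (m : ℕ) (hm : 2 ≤ m)
    (hJ : (Finset.univ.filter (fun j : Fin N => Real.sin (y j) = 0)).card = m)
    (A : Matrix (Fin N) (Fin N) ℂ)
    (hA : ∀ i j : Fin N, A i j =
      if (i : ℕ) + 1 < N then
        (if j = i then Complex.sin ((y i : ℝ) : ℂ)
         else if (j : ℕ) = (i : ℕ) + 1 then -Complex.sin ((y j : ℝ) : ℂ) else 0)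
      else
        (if (j : ℕ) + 1 = N then Complex.cos ((y j : ℝ) : ℂ) + η * Complex.sin ((y j : ℝ) : ℂ)
         else Complex.cos ((y j : ℝ) : ℂ))) :
    Module.finrank ℂ (LinearMap.ker A.mulVecLin) = m - 1 :=
  ker_dim_eq_general N y η m hm hJ A hA
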